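/- arXiv:0901.3577 — 2 statements merged into one kernel-verified Lean document; each statement's English description precedes it below -/
import Mathlib

section
/- Let f : [a,b] → ℝ be continuous and let p ∈ [a,b]. Then the star-shaped envelope of f with respect to p exists and is a continuous function on [a,b]; that is, the pointwise supremum of all minorants of f on [a,b] that are star-shaped with respect to p is itself a star-shaped (with respect to p) minorant of f and is continuous. -/
open Set

noncomputable section

/-- A set `S` is star-shaped with respect to a point `x ∈ S` when, for every `y ∈ S`,
the segment `[x,y]` lies in `S`. -/
def StarShapedWrt {V : Type*} [AddCommGroup V] [Module ℝ V] (S : Set V) (x : V) : Prop :=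
  x ∈ S ∧ ∀ y ∈ S, segment ℝ x y ⊆ S

/-- The epigraph of `f : S → ℝ`: `{(y,μ) ∈ S × ℝ : f(y) ≤ μ}`. -/
def Epigraph {V : Type*} (S : Set V) (f : V → ℝ) : Set (V × ℝ) :=
  {p : V × ℝ | p.1 ∈ S ∧ f p.1 ≤ p.2}

/-- A function `f : S → ℝ` is star-shaped with respect to `x` when its epigraph is
star-shaped with respect to `(x, f(x))`. -/
def StarShapedFunOn {V : Type*} [AddCommGroup V] [Module ℝ V]
    (S : Set V) (x : V) (f : V → ℝ) : Prop :=
  StarShapedWrt (Epigraph S f) (x, f x)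

/-- The star-shaped envelope of `f` on `S` with respect to `x`: the pointwise supremum of
all star-shaped (w.r.t. `x`) minorants of `f` on `S`. -/
def starEnv {V : Type*} [AddCommGroup V] [Module ℝ V]
    (S : Set V) (x : V) (f : V → ℝ) : V → ℝ :=
  fun y => sSup {r : ℝ | ∃ g : V → ℝ, StarShapedFunOn S x g ∧ (∀ z ∈ S, g z ≤ f z) ∧ r = g y}

/-!
The envelope is computed explicitly: its value at `y` is the infimum of the heights at `y` of the
chords joining `(p, f p)` to graph points `(z, f z)` with `y ∈ [p, z]`. Every star-shaped minorant
lies below each such chord, and shrinking a chord towards `p` keeps it a chord, so this infimum is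
itself a star-shaped minorant, hence the envelope. At `p` it is squeezed between `f` and the chord
bound coming from continuity of `f` at `p`. For `y > p` it equals
`f p + (y - p) * sInf (slope f p '' Icc y b)`, a running infimum of a function continuous away
from `p`; the case `y < p` follows by reflection.
-/

open Filter Topology

section Algebraic

variable {V : Type*} [AddCommGroup V] [Module ℝ V] {s : Set V} {p y : V} {f g : V → ℝ}

def chordValues (s : Set V) (p : V) (f : V → ℝ) (y : V) : Set ℝ :=
  {μ | ∃ z ∈ s, (y, μ) ∈ segment ℝ (p, f p) (z, f z)}

def chordEnvelope (s : Set V) (p : V) (f : V → ℝ) (y : V) : ℝ :=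
  sInf (chordValues s p f y)

theorem mem_chordValues {μ : ℝ} :
    μ ∈ chordValues s p f y ↔ ∃ z ∈ s, ∃ a b : ℝ, 0 ≤ a ∧ 0 ≤ b ∧ a + b = 1 ∧
      a • p + b • z = y ∧ a * f p + b * f z = μ := by
  simp only [chordValues, segment, Prod.smul_mk, smul_eq_mul, Prod.mk_add_mk, Prod.ext_iff,
    exists_and_left, mem_ofPred_eq]

theorem starShapedFunOn_iff :
    StarShapedFunOn s p g ↔ p ∈ s ∧ StarConvex ℝ p s ∧ ∀ y ∈ s, ∀ ⦃a b : ℝ⦄, 0 ≤ a → 0 ≤ b →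
      a + b = 1 → g (a • p + b • y) ≤ a * g p + b * g y := by
  simp only [StarShapedFunOn, StarShapedWrt, Epigraph, StarConvex, segment, subset_def,
    Prod.forall, Prod.smul_mk, Prod.mk_add_mk, smul_eq_mul]
  constructor
  · rintro ⟨⟨hp, -⟩, h⟩
    refine ⟨hp, fun y hy a b ha hb hab => (h y (g y) ⟨hy, le_rfl⟩ _ _ ⟨a, b, ha, hb, hab, rfl⟩).1,
      fun y hy a b ha hb hab => (h y (g y) ⟨hy, le_rfl⟩ _ _ ⟨a, b, ha, hb, hab, rfl⟩).2⟩
  · rintro ⟨hp, hs, h⟩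
    refine ⟨⟨hp, le_rfl⟩, ?_⟩
    rintro y μ ⟨hy, hμ : g y ≤ μ⟩ _ _ ⟨a, b, ha, hb, hab, ⟨⟩⟩
    refine ⟨hs hy ha hb hab, ?_⟩
    calc g (a • p + b • y) ≤ a * g p + b * g y := h y hy ha hb hab
      _ ≤ a * g p + b * μ := by gcongr

theorem StarShapedFunOn.congr (hg : StarShapedFunOn s p g) (hfg : EqOn g f s) :
    StarShapedFunOn s p f := by
  rw [starShapedFunOn_iff] at hg ⊢
  obtain ⟨hp, hs, h⟩ := hg
  refine ⟨hp, hs, fun y hy a b ha hb hab => ?_⟩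
  rw [← hfg hp, ← hfg hy, ← hfg (hs hy ha hb hab)]
  exact h y hy ha hb hab

theorem self_mem_chordValues (hy : y ∈ s) : f y ∈ chordValues s p f y :=
  ⟨y, hy, right_mem_segment ℝ _ _⟩

theorem chordValues_center (hp : p ∈ s) : chordValues s p f p = {f p} := by
  ext μ
  refine ⟨fun hμ => ?_, fun hμ => hμ ▸ self_mem_chordValues hp⟩
  obtain ⟨z, -, a, b, -, -, hab, hpz, rfl⟩ := mem_chordValues.1 hμ
  have : b • (z - p) = 0 := by linear_combination (norm := module) hpz - hab • p
  rcases smul_eq_zero.1 this with rfl | hz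
  · simp_all
  · rw [sub_eq_zero.1 hz, ← add_mul, hab, one_mul, mem_singleton_iff]

theorem chordValues_bddBelow (hp : p ∈ s) (hf : BddBelow (f '' s)) (y : V) :
    BddBelow (chordValues s p f y) := by
  obtain ⟨m, hm⟩ := hf
  refine ⟨m, fun μ hμ => ?_⟩
  obtain ⟨z, hz, a, b, ha, hb, hab, -, rfl⟩ := mem_chordValues.1 hμ
  have hmp := hm (mem_image_of_mem f hp)
  have hmz := hm (mem_image_of_mem f hz)
  calc m = a * m + b * m := by rw [← add_mul, hab, one_mul]
    _ ≤ a * f p + b * f z := by gcongr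

theorem chordEnvelope_le (hp : p ∈ s) (hf : BddBelow (f '' s)) (hy : y ∈ s) :
    chordEnvelope s p f y ≤ f y :=
  csInf_le (chordValues_bddBelow hp hf y) (self_mem_chordValues hy)

theorem chordEnvelope_center (hp : p ∈ s) : chordEnvelope s p f p = f p := by
  rw [chordEnvelope, chordValues_center hp, csInf_singleton]

theorem chordEnvelope_smul_add_smul_le (hp : p ∈ s) (hf : BddBelow (f '' s))
    (hy : y ∈ s) {a b : ℝ} (ha : 0 ≤ a) (hb : 0 ≤ b) (hab : a + b = 1) :
    chordEnvelope s p f (a • p + b • y) ≤ a * f p + b * chordEnvelope s p f y := by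
  rcases hb.eq_or_lt with rfl | hb
  · simp_all [chordEnvelope_center hp]
  suffices (chordEnvelope s p f (a • p + b • y) - a * f p) / b ≤ chordEnvelope s p f y by
    rw [div_le_iff₀ hb] at this; linarith
  refine le_csInf ⟨_, self_mem_chordValues hy⟩ fun μ hμ => ?_
  obtain ⟨z, hz, a', b', ha', hb', hab', rfl, rfl⟩ := mem_chordValues.1 hμ
  rw [div_le_iff₀ hb, sub_le_iff_le_add]
  exact csInf_le (chordValues_bddBelow hp hf _) (mem_chordValues.2
    ⟨z, hz, a + b * a', b * b', by positivity, by positivity,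
      by linear_combination b * hab' + hab, by module, by ring⟩)

theorem starShapedFunOn_chordEnvelope (hs : StarConvex ℝ p s) (hp : p ∈ s)
    (hf : BddBelow (f '' s)) : StarShapedFunOn s p (chordEnvelope s p f) := by
  refine starShapedFunOn_iff.2 ⟨hp, hs, fun y hy a b ha hb hab => ?_⟩
  rw [chordEnvelope_center hp]
  exact chordEnvelope_smul_add_smul_le hp hf hy ha hb hab

theorem le_chordEnvelope (hg : StarShapedFunOn s p g) (hgf : ∀ z ∈ s, g z ≤ f z) (hy : y ∈ s) :
    g y ≤ chordEnvelope s p f y := by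
  obtain ⟨hp, -, hstar⟩ := starShapedFunOn_iff.1 hg
  refine le_csInf ⟨_, self_mem_chordValues hy⟩ fun μ hμ => ?_
  obtain ⟨z, hz, a, b, ha, hb, hab, rfl, rfl⟩ := mem_chordValues.1 hμ
  calc g (a • p + b • z) ≤ a * g p + b * g z := hstar z hz ha hb hab
    _ ≤ a * f p + b * f z := by gcongr <;> exact hgf _ ‹_›

theorem starEnv_eqOn_chordEnvelope (hs : StarConvex ℝ p s) (hp : p ∈ s)
    (hf : BddBelow (f '' s)) : EqOn (starEnv s p f) (chordEnvelope s p f) s := by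
  intro y hy
  set S := {r | ∃ g : V → ℝ, StarShapedFunOn s p g ∧ (∀ z ∈ s, g z ≤ f z) ∧ r = g y}
  have hmem : chordEnvelope s p f y ∈ S :=
    ⟨_, starShapedFunOn_chordEnvelope hs hp hf, fun z hz => chordEnvelope_le hp hf hz, rfl⟩
  have hub : chordEnvelope s p f y ∈ upperBounds S := by
    rintro r ⟨g, hg, hgf, rfl⟩
    exact le_chordEnvelope hg hgf hy
  exact le_antisymm (csSup_le ⟨_, hmem⟩ hub) (le_csSup ⟨_, hub⟩ hmem)

theorem chordValues_neg :
    chordValues (-s) (-p) (fun x => f (-x)) (-y) = chordValues s p f y := by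
  ext μ
  simp only [mem_chordValues, neg_neg, Set.mem_neg]
  constructor
  · rintro ⟨z, hz, a, b, ha, hb, hab, hy, rfl⟩
    refine ⟨-z, hz, a, b, ha, hb, hab, ?_, rfl⟩
    rw [← neg_neg y, ← hy]
    simp only [smul_neg, neg_add, neg_neg]
  · rintro ⟨z, hz, a, b, ha, hb, hab, rfl, rfl⟩
    refine ⟨-z, by rwa [neg_neg], a, b, ha, hb, hab, ?_, by rw [neg_neg]⟩
    simp only [smul_neg, neg_add]

theorem chordEnvelope_neg :
    chordEnvelope (-s) (-p) (fun x => f (-x)) (-y) = chordEnvelope s p f y := by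
  rw [chordEnvelope, chordValues_neg, chordEnvelope]

end Algebraic

section Normed

variable {E : Type*} [NormedAddCommGroup E] [NormedSpace ℝ E] {s : Set E} {p y : E} {f : E → ℝ}

theorem sub_le_chordEnvelope {m c δ : ℝ} (hδ : 0 < δ) (hp : p ∈ s) (hm : ∀ z ∈ s, m ≤ f z)
    (hc : c ≤ f p) (hnear : ∀ z ∈ s, ‖z - p‖ < δ → c ≤ f z) (hy : y ∈ s) :
    c - (f p - m) * ‖y - p‖ / δ ≤ chordEnvelope s p f y := by
  refine le_csInf ⟨_, self_mem_chordValues hy⟩ fun μ hμ => ?_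
  obtain ⟨z, hz, a, b, ha, hb, hab, rfl, rfl⟩ := mem_chordValues.1 hμ
  have hmp : 0 ≤ f p - m := sub_nonneg.2 (hm p hp)
  have hnorm : ‖a • p + b • z - p‖ = b * ‖z - p‖ := by
    rw [show a • p + b • z - p = b • (z - p) by linear_combination (norm := module) hab • p,
      norm_smul, Real.norm_of_nonneg hb]
  rw [hnorm]
  rcases lt_or_ge ‖z - p‖ δ with hzδ | hzδ
  · have : c ≤ a * f p + b * f z := by
      calc c = a * c + b * c := by rw [← add_mul, hab, one_mul]
        _ ≤ a * f p + b * f z := by gcongr; exact hnear z hz hzδ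
    have : 0 ≤ (f p - m) * (b * ‖z - p‖) / δ := by positivity
    linarith
  · have hbδ : b * (f p - m) ≤ (f p - m) * (b * ‖z - p‖) / δ := by
      rw [le_div_iff₀ hδ]
      nlinarith [mul_nonneg hb hmp]
    have : f p - b * (f p - m) ≤ a * f p + b * f z := by
      linear_combination mul_le_mul_of_nonneg_left (hm z hz) hb - f p * hab
    linarith

theorem continuousWithinAt_chordEnvelope_center (hp : p ∈ s) (hbdd : BddBelow (f '' s))
    (hf : ContinuousWithinAt f s p) : ContinuousWithinAt (chordEnvelope s p f) s p := by
  rw [ContinuousWithinAt, chordEnvelope_center hp]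
  refine tendsto_order.2 ⟨fun c hc => ?_, fun c hc => ?_⟩
  · obtain ⟨m, hm⟩ := hbdd
    obtain ⟨c', hcc', hc'p⟩ := exists_between hc
    obtain ⟨δ, hδ, hnear⟩ := Metric.eventually_nhds_iff.1
      (eventually_nhdsWithin_iff.1 (hf.eventually (lt_mem_nhds hc'p)))
    have hbound : Continuous fun y => c' - (f p - m) * ‖y - p‖ / δ := by fun_prop
    have hlim : Tendsto (fun y => c' - (f p - m) * ‖y - p‖ / δ) (𝓝[s] p) (𝓝 c') :=
      (hbound.tendsto' p c' (by simp)).mono_left nhdsWithin_le_nhds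
    filter_upwards [hlim.eventually (lt_mem_nhds hcc'), self_mem_nhdsWithin] with y hcy hy
    exact hcy.trans_le (sub_le_chordEnvelope hδ hp (fun z hz => hm (mem_image_of_mem f hz))
      hc'p.le (fun z hz hzp => (hnear (by rwa [dist_eq_norm]) hz).le) hy)
  · filter_upwards [hf.eventually (gt_mem_nhds hc), self_mem_nhdsWithin] with y hfy hy
    exact (chordEnvelope_le hp hbdd hy).trans_lt hfy

end Normed

theorem continuousOn_slope {𝕜 F : Type*} [NontriviallyNormedField 𝕜] [NormedAddCommGroup F]
    [NormedSpace 𝕜 F] {f : 𝕜 → F} {t : Set 𝕜} {p : 𝕜} (hf : ContinuousOn f t) (hp : p ∉ t) :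
    ContinuousOn (slope f p) t := by
  rw [slope_fun_def]
  exact ((continuousOn_id.sub continuousOn_const).inv₀ fun z hz =>
    sub_ne_zero.2 (ne_of_mem_of_not_mem hz hp)).smul (hf.sub continuousOn_const)

theorem continuousOn_sInf_image_Icc {α : Type*} [ConditionallyCompleteLinearOrder α]
    [TopologicalSpace α] [OrderTopology α] {g : ℝ → α} {c b : ℝ}
    (hg : ContinuousOn g (Icc c b)) : ContinuousOn (fun y => sInf (g '' Icc y b)) (Icc c b) := by
  rcases lt_or_ge b c with hbc | hcb
  · simp [Icc_eq_empty_of_lt hbc]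
  set G := fun z => g (projIcc c b hcb z)
  have hG : Continuous G := hg.comp_continuous
    (continuous_subtype_val.comp continuous_projIcc) fun z => (projIcc c b hcb z).2
  -- `max y t` reparametrizes `[y, b]` by the fixed compact `[c, b]`.
  have hcont : Continuous fun y => sInf ((fun y t => G (max y t)) y '' Icc c b) :=
    isCompact_Icc.continuous_sInf (by fun_prop)
  refine hcont.continuousOn.congr fun y hy => congrArg sInf ?_
  ext v
  constructor
  · rintro ⟨z, hz, rfl⟩
    have hzcb : z ∈ Icc c b := ⟨hy.1.trans hz.1, hz.2⟩
    exact ⟨z, hzcb, by simp only [G, max_eq_right hz.1, projIcc_of_mem hcb hzcb]⟩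
  · rintro ⟨t, ht, rfl⟩
    have hmax : max y t ∈ Icc c b := ⟨hy.1.trans (le_max_left y t), max_le hy.2 ht.2⟩
    exact ⟨max y t, ⟨le_max_left y t, hmax.2⟩, by simp only [G, projIcc_of_mem hcb hmax]⟩

section Interval

variable {f : ℝ → ℝ} {a b c p y : ℝ}

theorem chordValues_Icc_eq_image_of_lt (hpy : p < y) (hay : a ≤ y) :
    chordValues (Icc a b) p f y = (fun z => f p + (y - p) * slope f p z) '' Icc y b := by
  ext μ
  simp only [mem_chordValues, slope_def_field, smul_eq_mul, mem_image]
  constructor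
  · rintro ⟨z, hz, a', b', ha', hb', hab, rfl, rfl⟩
    obtain rfl : a' = 1 - b' := by linarith
    have hzp : 0 < z - p := by nlinarith
    refine ⟨z, ⟨by nlinarith, hz.2⟩, ?_⟩
    field_simp
    ring
  · rintro ⟨z, hz, rfl⟩
    have hzp : 0 < z - p := by linarith [hz.1]
    refine ⟨z, ⟨hay.trans hz.1, hz.2⟩, 1 - (y - p) / (z - p), (y - p) / (z - p), ?_,
      by positivity, by ring, ?_, ?_⟩
    · rw [sub_nonneg, div_le_one hzp]; linarith [hz.1]
    · field_simp; ring
    · field_simp; ring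

theorem chordEnvelope_Icc_eq_of_lt (hf : ContinuousOn f (Icc a b)) (hpy : p < y)
    (hy : y ∈ Icc a b) :
    chordEnvelope (Icc a b) p f y = f p + (y - p) * sInf (slope f p '' Icc y b) := by
  have hslope : ContinuousOn (slope f p) (Icc y b) :=
    continuousOn_slope (hf.mono (Icc_subset_Icc_left hy.1)) fun hp => hpy.not_ge hp.1
  have hmono : Monotone fun m => f p + (y - p) * m := fun m m' h =>
    add_le_add_right (mul_le_mul_of_nonneg_left h (sub_nonneg.2 hpy.le)) _
  rw [chordEnvelope, chordValues_Icc_eq_image_of_lt hpy hy.1,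
    ← image_image (g := fun m => f p + (y - p) * m)]
  exact (hmono.map_csInf_of_continuousAt (by fun_prop) ((nonempty_Icc.2 hy.2).image _)
    (isCompact_Icc.bddBelow_image hslope)).symm

theorem continuousOn_chordEnvelope_Icc_of_lt (hf : ContinuousOn f (Icc a b)) (hpc : p < c)
    (hac : a ≤ c) : ContinuousOn (chordEnvelope (Icc a b) p f) (Icc c b) := by
  have hslope : ContinuousOn (slope f p) (Icc c b) :=
    continuousOn_slope (hf.mono (Icc_subset_Icc_left hac)) fun hp => hpc.not_ge hp.1
  exact (continuousOn_const.add ((continuousOn_id.sub continuousOn_const).mul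
    (continuousOn_sInf_image_Icc hslope))).congr fun y hy =>
      chordEnvelope_Icc_eq_of_lt hf (hpc.trans_le hy.1) ⟨hac.trans hy.1, hy.2⟩

theorem continuousWithinAt_chordEnvelope_Icc_of_lt (hf : ContinuousOn f (Icc a b))
    (hap : a ≤ p) (hy : y ∈ Icc a b) (hpy : p < y) :
    ContinuousWithinAt (chordEnvelope (Icc a b) p f) (Icc a b) y := by
  obtain ⟨c, hpc, hcy⟩ := exists_between hpy
  refine ((continuousOn_chordEnvelope_Icc_of_lt hf hpc (hap.trans hpc.le)) y
    ⟨hcy.le, hy.2⟩).mono_of_mem_nhdsWithin ?_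
  exact mem_nhdsWithin.2 ⟨Ioi c, isOpen_Ioi, hcy, fun z hz => ⟨hz.1.le, hz.2.2⟩⟩

theorem continuousWithinAt_chordEnvelope_Icc_of_gt (hf : ContinuousOn f (Icc a b))
    (hpb : p ≤ b) (hy : y ∈ Icc a b) (hyp : y < p) :
    ContinuousWithinAt (chordEnvelope (Icc a b) p f) (Icc a b) y := by
  have hneg : MapsTo Neg.neg (Icc a b) (Icc (-b) (-a)) := fun x hx => by
    rwa [← neg_Icc, Set.mem_neg, neg_neg]
  have hreflect : chordEnvelope (Icc a b) p f =
      fun x => chordEnvelope (Icc (-b) (-a)) (-p) (fun x => f (-x)) (-x) := by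
    funext x
    rw [← neg_Icc, chordEnvelope_neg]
  rw [hreflect]
  refine (continuousWithinAt_chordEnvelope_Icc_of_lt ?_ (neg_le_neg hpb) (hneg hy)
    (neg_lt_neg hyp)).comp continuousWithinAt_neg hneg
  exact hf.comp continuousOn_neg fun x hx => by rwa [← neg_Icc, Set.mem_neg] at hx

theorem continuousOn_chordEnvelope_Icc (hp : p ∈ Icc a b) (hf : ContinuousOn f (Icc a b)) :
    ContinuousOn (chordEnvelope (Icc a b) p f) (Icc a b) := by
  intro y hy
  rcases lt_trichotomy y p with hyp | rfl | hpy
  · exact continuousWithinAt_chordEnvelope_Icc_of_gt hf hp.2 hy hyp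
  · exact continuousWithinAt_chordEnvelope_center hy (isCompact_Icc.bddBelow_image hf) (hf y hy)
  · exact continuousWithinAt_chordEnvelope_Icc_of_lt hf hp.1 hy hpy

end Interval

theorem star_envelope_exists_continuous_general
    (a b : ℝ) (p : ℝ) (hp : p ∈ Set.Icc a b)
    (f : ℝ → ℝ) (hf : ContinuousOn f (Set.Icc a b)) :
    (∀ y ∈ Set.Icc a b, starEnv (Set.Icc a b) p f y ≤ f y) ∧
    StarShapedFunOn (Set.Icc a b) p (starEnv (Set.Icc a b) p f) ∧
    ContinuousOn (starEnv (Set.Icc a b) p f) (Set.Icc a b) := by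
  have hbdd : BddBelow (f '' Icc a b) := isCompact_Icc.bddBelow_image hf
  have hstar : StarConvex ℝ p (Icc a b) := (convex_Icc a b).starConvex hp
  have henv := starEnv_eqOn_chordEnvelope hstar hp hbdd
  refine ⟨fun y hy => henv hy ▸ chordEnvelope_le hp hbdd hy, ?_, ?_⟩
  · exact (starShapedFunOn_chordEnvelope hstar hp hbdd).congr henv.symm
  · exact (continuousOn_chordEnvelope_Icc hp hf).congr henv

/-- **Existence and continuity of the one-dimensional star-shaped envelope.** For
continuous `f : [a,b] → ℝ` and `p ∈ [a,b]`, the pointwise supremum of all star-shaped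
(w.r.t. `p`) minorants of `f` on `[a,b]` is itself a star-shaped (w.r.t. `p`) minorant
of `f`, and it is continuous on `[a,b]`. -/
theorem star_envelope_exists_continuous
    (a b : ℝ) (hab : a ≤ b) (p : ℝ) (hp : p ∈ Set.Icc a b)
    (f : ℝ → ℝ) (hf : ContinuousOn f (Set.Icc a b)) :
    (∀ y ∈ Set.Icc a b, starEnv (Set.Icc a b) p f y ≤ f y) ∧
    StarShapedFunOn (Set.Icc a b) p (starEnv (Set.Icc a b) p f) ∧
    ContinuousOn (starEnv (Set.Icc a b) p f) (Set.Icc a b) :=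
  star_envelope_exists_continuous_general a b p hp f hf
end
end

section
/- Let f : [a,b] → ℝ be continuous and suppose f achieves its minimum at a single point x ∈ [a,b] (f(y) > f(x) for all y ≠ x). Then the star-shaped envelope of f with respect to x also achieves its minimum at the single point x: star_x(f)(y) > star_x(f)(x) = f(x) for all y ∈ [a,b], y ≠ x. -/
/-!
A convex function has a convex epigraph, hence is star-shaped with respect to every point,
so every convex minorant of `f` bounds the envelope from below; the constant `f x` already
gives `star_x(f)(x) = f(x)`. For `y ≠ x` put `δ = dist y x / 2`. By compactness and
uniqueness of the minimiser, `f ≥ f x + m` for some `m > 0` outside the ball of radius `δ`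
about `x`, so the convex ramp `f x + c · max 0 (dist z x - δ)` with small slope `c > 0` is a
minorant of `f`, and it exceeds `f x` at `y`.
-/

open Set

noncomputable section

section Envelope

variable {V : Type*} [AddCommGroup V] [Module ℝ V] {S : Set V} {x y : V} {f g : V → ℝ}

theorem ConvexOn.starShapedFunOn (hg : ConvexOn ℝ S g) (hx : x ∈ S) :
    StarShapedFunOn S x g :=
  ⟨⟨hx, le_rfl⟩, fun _ hp => hg.convex_epigraph.segment_subset ⟨hx, le_rfl⟩ hp⟩

theorem mem_upperBounds_starEnv_set (hy : y ∈ S) :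
    f y ∈ upperBounds
      {r : ℝ | ∃ g : V → ℝ, StarShapedFunOn S x g ∧ (∀ z ∈ S, g z ≤ f z) ∧ r = g y} := by
  rintro r ⟨g, -, hgf, rfl⟩
  exact hgf y hy

theorem le_starEnv (hg : StarShapedFunOn S x g) (hgf : ∀ z ∈ S, g z ≤ f z) (hy : y ∈ S) :
    g y ≤ starEnv S x f y :=
  le_csSup ⟨f y, mem_upperBounds_starEnv_set hy⟩ ⟨g, hg, hgf, rfl⟩

theorem starEnv_le (hg : StarShapedFunOn S x g) (hgf : ∀ z ∈ S, g z ≤ f z) (hy : y ∈ S) :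
    starEnv S x f y ≤ f y :=
  csSup_le ⟨g y, g, hg, hgf, rfl⟩ (mem_upperBounds_starEnv_set hy)

theorem starEnv_eq_of_isMinOn (hS : Convex ℝ S) (hx : x ∈ S) (hmin : IsMinOn f S x) :
    starEnv S x f x = f x := by
  have hconst : StarShapedFunOn S x (fun _ => f x) :=
    (convexOn_const (f x) hS).starShapedFunOn hx
  have hminorant : ∀ z ∈ S, f x ≤ f z := isMinOn_iff.1 hmin
  exact le_antisymm (starEnv_le hconst hminorant hx)
    (le_starEnv (g := fun _ => f x) hconst hminorant hx)

end Envelope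

theorem isMinOn_of_forall_ne_lt {α β : Type*} [Preorder β] {f : α → β} {s : Set α} {a : α}
    (h : ∀ x ∈ s, x ≠ a → f a < f x) : IsMinOn f s a :=
  isMinOn_iff.2 fun x hx =>
    (eq_or_ne x a).elim (fun hxa => hxa ▸ le_rfl) fun hxa => (h x hx hxa).le

theorem IsCompact.exists_pos_add_le_of_le_dist {X : Type*} [PseudoMetricSpace X] {K : Set X}
    {f : X → ℝ} {x : X} {δ : ℝ} (hK : IsCompact K) (hf : ContinuousOn f K)
    (hmin : ∀ y ∈ K, y ≠ x → f x < f y) (hδ : 0 < δ) :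
    ∃ m > 0, ∀ z ∈ K, δ ≤ dist z x → f x + m ≤ f z := by
  set K' := K ∩ {z | δ ≤ dist z x}
  have hK' : IsCompact K' :=
    hK.inter_right (isClosed_le continuous_const (continuous_id.dist continuous_const))
  rcases K'.eq_empty_or_nonempty with hempty | hne
  · exact ⟨1, one_pos, fun z hz hzx =>
      (eq_empty_iff_forall_notMem.1 hempty z ⟨hz, hzx⟩).elim⟩
  obtain ⟨z₀, ⟨hz₀K, hz₀δ⟩, hz₀min⟩ := hK'.exists_isMinOn hne (hf.mono inter_subset_left)
  have hz₀x : z₀ ≠ x := by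
    rintro rfl
    exact (dist_self z₀ ▸ hz₀δ : δ ≤ 0).not_gt hδ
  refine ⟨f z₀ - f x, sub_pos.2 (hmin z₀ hz₀K hz₀x), fun z hz hzx => ?_⟩
  linarith [isMinOn_iff.1 hz₀min z ⟨hz, hzx⟩]

theorem lt_starEnv_of_forall_lt {V : Type*} [NormedAddCommGroup V] [NormedSpace ℝ V]
    {S : Set V} {x y : V} {f : V → ℝ} (hS : Convex ℝ S) (hK : IsCompact S)
    (hf : ContinuousOn f S) (hmin : ∀ z ∈ S, z ≠ x → f x < f z) (hx : x ∈ S) (hy : y ∈ S)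
    (hyx : y ≠ x) : f x < starEnv S x f y := by
  have hfx : IsMinOn f S x := isMinOn_of_forall_ne_lt hmin
  set δ := dist y x / 2
  have hδ : 0 < δ := half_pos (dist_pos.2 hyx)
  obtain ⟨m, hm, hfm⟩ := hK.exists_pos_add_le_of_le_dist hf hmin hδ
  obtain ⟨R, hR⟩ := (Metric.isBounded_iff_subset_closedBall x).1 hK.isBounded
  have hRpos : 0 < R := (dist_pos.2 hyx).trans_le (hR hy)
  set c := m / R
  have hc : 0 < c := div_pos hm hRpos
  set g : V → ℝ := fun z => c * max 0 (dist z x - δ) + f x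
  have hgconv : ConvexOn ℝ S g :=
    (((convexOn_const 0 hS).sup ((convexOn_dist x hS).add_const (-δ))).smul hc.le).add_const (f x)
  have hgf : ∀ z ∈ S, g z ≤ f z := by
    intro z hz
    rcases le_or_gt δ (dist z x) with hzδ | hzδ
    · have hramp : c * max 0 (dist z x - δ) ≤ m :=
        calc c * max 0 (dist z x - δ) ≤ c * R := by
              gcongr
              exact max_le hRpos.le (by linarith [Metric.mem_closedBall.1 (hR hz)])
          _ = m := div_mul_cancel₀ m hRpos.ne'
      linarith [hfm z hz hzδ]
    · simp only [g, max_eq_left (sub_nonpos.2 hzδ.le), mul_zero, zero_add]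
      exact hfx hz
  have hgy : f x < g y := by
    have hyδ : dist y x - δ = δ := by simp only [δ]; ring
    simp only [g, hyδ, max_eq_right hδ.le]
    linarith [mul_pos hc hδ]
  exact hgy.trans_le (le_starEnv (hgconv.starShapedFunOn hx) hgf hy)

theorem star_envelope_unique_minimum_general
    (a b : ℝ) (x : ℝ) (hx : x ∈ Set.Icc a b)
    (f : ℝ → ℝ) (hf : ContinuousOn f (Set.Icc a b))
    (hmin : ∀ y ∈ Set.Icc a b, y ≠ x → f x < f y) :
    starEnv (Set.Icc a b) x f x = f x ∧
    ∀ y ∈ Set.Icc a b, y ≠ x →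
      starEnv (Set.Icc a b) x f x < starEnv (Set.Icc a b) x f y := by
  have henv : starEnv (Set.Icc a b) x f x = f x :=
    starEnv_eq_of_isMinOn (convex_Icc a b) hx (isMinOn_of_forall_ne_lt hmin)
  refine ⟨henv, fun y hy hyx => henv ▸ ?_⟩
  exact lt_starEnv_of_forall_lt (convex_Icc a b) isCompact_Icc hf hmin hx hy hyx

/-- **The star-shaped envelope preserves a unique minimum.** If continuous
`f : [a,b] → ℝ` attains its minimum at the single point `x`, then so does its
star-shaped envelope with respect to `x`:
`star_x(f)(y) > star_x(f)(x) = f(x)` for every `y ≠ x` in `[a,b]`. -/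
theorem star_envelope_unique_minimum
    (a b : ℝ) (hab : a ≤ b) (x : ℝ) (hx : x ∈ Set.Icc a b)
    (f : ℝ → ℝ) (hf : ContinuousOn f (Set.Icc a b))
    (hmin : ∀ y ∈ Set.Icc a b, y ≠ x → f x < f y) :
    starEnv (Set.Icc a b) x f x = f x ∧
    ∀ y ∈ Set.Icc a b, y ≠ x →
      starEnv (Set.Icc a b) x f x < starEnv (Set.Icc a b) x f y :=
  star_envelope_unique_minimum_general a b x hx f hf hmin
end
end
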